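/- Let (P,≤) be a finite diamond-free connected poset that has no full subposet isomorphic to Z_n for any even n ≥ 4. Then the Hasse diagram of (P,≤) is a tree (contains no cycle as an undirected graph). -/

import Mathlib

/-!
Going around a cycle of the Hasse diagram, its valleys and peaks form a closed fence
`x 0 ≤ y 0 ≥ x 1 ≤ y 1 ≥ ⋯ ≥ x 0`. Both cycle neighbours of a valley cover it, so by
diamond-freeness the two peaks next to it have no common upper bound; dually at peaks.

A fence of minimal length `m` is chordless: a chord `x L ≤ y 0` with `2 ≤ L < m` closes the
shorter fence `y 0 ≥ x 1 ≤ ⋯ ≤ y (L - 1) ≥ x L ≤ y 0`, which by diamond-freeness can only fail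
if `y 0, y (L - 1)` or `x 1, x L` are comparable, and each such comparability is a chord of
length `L - 1` of the fence, of its rotation or of its order dual. A chordless fence of length
`m ≥ 2` is an induced crown `Z_{2m}`, which is excluded.
-/

section

open Function OrderDual

namespace Nat

variable {p : ℕ → Prop} [DecidablePred p] {k : ℕ}

theorem add_one_mod_eq_or {L : ℕ} (hL : 0 < L) (j : ℕ) :
    (j + 1) % L = j % L + 1 ∨ (j % L + 1 = L ∧ (j + 1) % L = 0) := by
  obtain rfl | hL1 := show L = 1 ∨ 1 < L by omega
  · simp [Nat.mod_one]
  have := Nat.mod_lt j hL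
  rw [Nat.add_mod_eq_ite, Nat.mod_eq_of_lt hL1]
  split_ifs <;> omega

theorem count_add_of_periodic (hp : Periodic p k) (t : ℕ) :
    count p (t + k) = count p t + count p k := by
  have : (fun j => p (k + j)) = p := funext fun j => by rw [add_comm]; exact hp j
  rw [add_comm t k, count_add, add_comm]
  simp only [this]

theorem nth_add_count_of_periodic (hp : Periodic p k) (hinf : (Set.ofPred p).Infinite)
    (n : ℕ) : nth p (n + count p k) = nth p n + k := by
  have hmem : p (nth p n + k) := by rw [hp]; exact nth_mem_of_infinite hinf n
  rw [← nth_count hmem, count_add_of_periodic hp, count_nth_of_infinite hinf]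

theorem count_eq_of_nth_lt_of_le_nth (hinf : (Set.ofPred p).Infinite) {n t : ℕ}
    (h₁ : nth p n < t) (h₂ : t ≤ nth p (n + 1)) : count p t = n + 1 := by
  have := (lt_nth_iff_count_lt hinf).2 h₁
  have := (count_le_iff_le_nth hinf).2 h₂
  omega

end Nat

variable {P : Type*} [PartialOrder P]

theorem bddAbove_pair_iff {a b : P} : BddAbove ({a, b} : Set P) ↔ ∃ d, a ≤ d ∧ b ≤ d := by
  simp [BddAbove, upperBounds, Set.Nonempty]

theorem bddBelow_pair_iff {a b : P} : BddBelow ({a, b} : Set P) ↔ ∃ d, d ≤ a ∧ d ≤ b := by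
  simp [BddBelow, lowerBounds, Set.Nonempty]

theorem CovBy.not_le_of_ne {a b c : P} (hb : a ⋖ b) (hc : a ⋖ c) (hbc : b ≠ c) : ¬ b ≤ c :=
  fun h => hbc ((hc.eq_or_eq hb.le h).resolve_left hb.lt.ne')

def DiamondFree (P : Type*) [PartialOrder P] : Prop :=
  ∀ ⦃a b c d : P⦄, a ≤ b → b ≤ d → a ≤ c → c ≤ d → b ≤ c ∨ c ≤ b

namespace DiamondFree

theorem dual (hP : DiamondFree P) : DiamondFree Pᵒᵈ :=
  fun _ _ _ _ hab hbd hac hcd => hP hcd hac hbd hab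

theorem not_bddAbove (hP : DiamondFree P) {a b c : P} (hab : a ≤ b) (hac : a ≤ c)
    (hbc : ¬ b ≤ c) (hcb : ¬ c ≤ b) : ¬ BddAbove ({b, c} : Set P) := by
  rw [bddAbove_pair_iff]
  rintro ⟨d, hbd, hcd⟩
  exact (hP hab hbd hac hcd).elim hbc hcb

theorem not_bddBelow (hP : DiamondFree P) {a b c : P} (hba : b ≤ a) (hca : c ≤ a)
    (hbc : ¬ b ≤ c) (hcb : ¬ c ≤ b) : ¬ BddBelow ({b, c} : Set P) :=
  hP.dual.not_bddAbove (P := Pᵒᵈ) hba hca hcb hbc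

theorem not_bddAbove_of_covBy (hP : DiamondFree P) {a b c : P} (hb : a ⋖ b) (hc : a ⋖ c)
    (hbc : b ≠ c) : ¬ BddAbove ({b, c} : Set P) :=
  hP.not_bddAbove hb.le hc.le (hb.not_le_of_ne hc hbc) (hc.not_le_of_ne hb hbc.symm)

theorem not_bddBelow_of_covBy (hP : DiamondFree P) {a b c : P} (hb : b ⋖ a) (hc : c ⋖ a)
    (hbc : b ≠ c) : ¬ BddBelow ({b, c} : Set P) :=
  hP.dual.not_bddAbove_of_covBy (P := Pᵒᵈ) (toDual_covBy_toDual_iff.2 hb)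
    (toDual_covBy_toDual_iff.2 hc) hbc

end DiamondFree

def crownLE (n : ℕ) (a b : Fin n) : Prop :=
  a = b ∨ (Even a.val ∧ (b.val = (a.val + 1) % n ∨ b.val = (a.val + (n - 1)) % n))

theorem crownLE_iff {n : ℕ} (hn : Even n) (a b : Fin n) :
    crownLE n a b ↔ a.val = b.val ∨
      (a.val % 2 = 0 ∧ (b.val = a.val + 1 ∨ b.val + 1 = a.val ∨ (a.val = 0 ∧ b.val + 1 = n))) := by
  obtain ⟨a, ha⟩ := a
  obtain ⟨b, hb⟩ := b
  obtain ⟨k, rfl⟩ := hn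
  have h₁ : 1 % (k + k) = 1 := Nat.mod_eq_of_lt (by omega)
  have h₂ : (k + k - 1) % (k + k) = k + k - 1 := Nat.mod_eq_of_lt (by omega)
  simp only [crownLE, Fin.ext_iff, Nat.even_iff, Nat.add_mod_eq_ite, Nat.mod_eq_of_lt ha, h₁, h₂]
  split_ifs <;> omega

/-- A closed fence `x 0 ≤ y 0 ≥ x 1 ≤ y 1 ≥ ⋯`, read with period `m`, in which consecutive upper
points have no common upper bound and consecutive lower points no common lower bound. -/
structure IsFence (x y : ℕ → P) (m : ℕ) : Prop where
  pos : 0 < m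
  periodic_lower : Periodic x m
  periodic_upper : Periodic y m
  le : ∀ i, x i ≤ y i
  succ_le : ∀ i, x (i + 1) ≤ y i
  not_bddAbove : ∀ i, ¬ BddAbove ({y i, y (i + 1)} : Set P)
  not_bddBelow : ∀ i, ¬ BddBelow ({x i, x (i + 1)} : Set P)

namespace IsFence

variable {x y : ℕ → P} {m : ℕ}

theorem shift (F : IsFence x y m) (s : ℕ) :
    IsFence (fun i => x (i + s)) (fun i => y (i + s)) m where
  pos := F.pos
  periodic_lower i := by simp only [add_right_comm i m s, F.periodic_lower _]
  periodic_upper i := by simp only [add_right_comm i m s, F.periodic_upper _]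
  le i := F.le _
  succ_le i := by simpa only [add_right_comm i 1 s] using F.succ_le _
  not_bddAbove i := by simpa only [add_right_comm i 1 s] using F.not_bddAbove _
  not_bddBelow i := by simpa only [add_right_comm i 1 s] using F.not_bddBelow _

theorem dual (F : IsFence x y m) : IsFence (toDual ∘ y) (toDual ∘ x ∘ (· + 1)) m where
  pos := F.pos
  periodic_lower := F.periodic_upper.comp toDual
  periodic_upper i := by simp only [comp_apply, add_right_comm i m 1, F.periodic_lower _]
  le := F.succ_le
  succ_le i := F.le (i + 1)
  not_bddAbove i := F.not_bddBelow (i + 1)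
  not_bddBelow := F.not_bddAbove

theorem ofDual {x y : ℕ → Pᵒᵈ} (F : IsFence x y m) :
    IsFence (ofDual ∘ y) (ofDual ∘ x ∘ (· + 1)) m :=
  F.dual

theorem two_le (F : IsFence x y m) : 2 ≤ m := by
  by_contra h
  have hm : m = 1 := by have := F.pos; omega
  apply F.not_bddAbove 0
  rw [zero_add, ← hm, ← zero_add m, F.periodic_upper, Set.pair_eq_singleton]
  exact bddAbove_singleton

/-- The chord `x L ≤ y 0` closes the fence `y 0 ≥ x 1 ≤ y 1 ≥ ⋯ ≤ y (L - 1) ≥ x L ≤ y 0`. -/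
theorem splice (F : IsFence x y m) {L : ℕ} (hL : 0 < L) (hch : x L ≤ y 0)
    (hy : ¬ BddAbove ({y (L - 1), y 0} : Set P)) (hx : ¬ BddBelow ({x L, x 1} : Set P)) :
    IsFence (fun j => x (j % L + 1)) (fun j => y ((j + 1) % L)) L where
  pos := hL
  periodic_lower j := by simp
  periodic_upper j := by simp [add_right_comm j L 1]
  le j := by
    rcases Nat.add_one_mod_eq_or hL j with h | ⟨h, h'⟩
    · simpa only [h] using F.le _
    · simpa only [h, h'] using hch
  succ_le j := F.succ_le _
  not_bddAbove j := by
    rcases Nat.add_one_mod_eq_or hL (j + 1) with h | ⟨h, h'⟩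
    · simpa only [h] using F.not_bddAbove _
    · simpa only [h', show (j + 1) % L = L - 1 by omega] using hy
  not_bddBelow j := by
    rcases Nat.add_one_mod_eq_or hL j with h | ⟨h, h'⟩
    · simpa only [h] using F.not_bddBelow _
    · simpa only [h, h'] using hx

theorem exists_shorter_of_chord (hP : DiamondFree P) (F : IsFence x y m) {L : ℕ}
    (hL : 2 ≤ L) (hLm : L < m) (hch : x L ≤ y 0) :
    ∃ m' < m, ∃ x' y' : ℕ → P, IsFence x' y' m' := by
  induction L using Nat.strong_induction_on generalizing P with
  | _ L ih =>
  obtain rfl | hL3 := show L = 2 ∨ 3 ≤ L by omega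
  · refine ⟨2, hLm, _, _, F.splice (by omega) hch ?_ ?_⟩
    · simpa [Set.pair_comm] using F.not_bddAbove 0
    · simpa [Set.pair_comm] using F.not_bddBelow 1
  have hxL : x L ≤ y (L - 1) := by
    simpa only [show L - 1 + 1 = L by omega] using F.succ_le (L - 1)
  by_cases h₁ : y (L - 1) ≤ y 0
  · exact ih (L - 1) (by omega) hP F (by omega) (by omega) ((F.le _).trans h₁)
  by_cases h₂ : x L ≤ x 1
  · exact ih (L - 1) (by omega) hP (F.shift 1) (by omega) (by omega)
      (by simpa only [show L - 1 + 1 = L by omega] using h₂.trans (F.le 1))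
  by_cases h₃ : y 0 ≤ y (L - 1)
  · obtain ⟨m', hm', _, _, F'⟩ := ih (L - 1) (by omega) hP.dual F.dual (by omega) (by omega)
      ((F.succ_le 0).trans h₃)
    exact ⟨m', hm', _, _, F'.ofDual⟩
  by_cases h₄ : x 1 ≤ x L
  · obtain ⟨m', hm', _, _, F'⟩ := ih (L - 1) (by omega) hP.dual F.dual (by omega) (by omega)
      (h₄.trans hxL)
    exact ⟨m', hm', _, _, F'.ofDual⟩
  exact ⟨L, hLm, _, _, F.splice (by omega) hch (hP.not_bddAbove hxL hch h₁ h₃)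
    (hP.not_bddBelow hch (F.succ_le 0) h₂ h₄)⟩

theorem exists_chordless (hP : DiamondFree P) (F : IsFence x y m) :
    ∃ m, ∃ x y : ℕ → P, IsFence x y m ∧ ∀ s L, 2 ≤ L → L < m → ¬ x (s + L) ≤ y s := by
  classical
  have h : ∃ m, ∃ x y : ℕ → P, IsFence x y m := ⟨m, x, y, F⟩
  obtain ⟨x₀, y₀, F₀⟩ := Nat.find_spec h
  refine ⟨_, x₀, y₀, F₀, fun s L hL hLm hch => ?_⟩
  obtain ⟨m', hm', hF'⟩ :=
    (F₀.shift s).exists_shorter_of_chord hP hL hLm (by simpa [add_comm] using hch)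
  exact Nat.find_min h hm' hF'

section Chordless

variable (F : IsFence x y m) (hch : ∀ s L, 2 ≤ L → L < m → ¬ x (s + L) ≤ y s)
include F hch

theorem lower_le_upper_iff {a b : ℕ} (ha : a < m) (hb : b < m) :
    x a ≤ y b ↔ b = a ∨ b + 1 = a ∨ (a = 0 ∧ b + 1 = m) := by
  refine ⟨fun h => ?_, ?_⟩
  · by_contra hab
    rcases Nat.lt_or_ge a b with hlt | hge
    · refine hch b (a + m - b) (by omega) (by omega) ?_
      rwa [show b + (a + m - b) = a + m by omega, F.periodic_lower]
    · exact hch b (a - b) (by omega) (by omega) (by rwa [show b + (a - b) = a by omega])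
  · rintro (rfl | rfl | ⟨rfl, hbm⟩)
    · exact F.le _
    · exact F.succ_le _
    · have : x m = x 0 := by simpa using F.periodic_lower 0
      simpa [hbm, this] using F.succ_le b

theorem eq_or_succ_eq_of_lower_le_upper {a b : ℕ} (ha : a < m) (hb : b < m) (h : x a ≤ y b) :
    b = a ∨ (x (b + 1) = x a ∧ y (b + 1) = y a) := by
  rcases (F.lower_le_upper_iff hch ha hb).1 h with rfl | rfl | ⟨rfl, hbm⟩
  · exact Or.inl rfl
  · exact Or.inr ⟨rfl, rfl⟩
  · rw [hbm]
    exact Or.inr ⟨by simpa using F.periodic_lower 0, by simpa using F.periodic_upper 0⟩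

theorem eq_of_lower_le_lower {a b : ℕ} (ha : a < m) (hb : b < m) (h : x a ≤ x b) : a = b := by
  rcases F.eq_or_succ_eq_of_lower_le_upper hch ha hb (h.trans (F.le b)) with rfl | ⟨hx, -⟩
  · rfl
  · exact absurd (bddBelow_pair_iff.2 ⟨x a, h, hx.ge⟩) (F.not_bddBelow b)

theorem eq_of_upper_le_upper {a b : ℕ} (ha : a < m) (hb : b < m) (h : y a ≤ y b) : a = b := by
  rcases F.eq_or_succ_eq_of_lower_le_upper hch ha hb ((F.le a).trans h) with rfl | ⟨-, hy⟩
  · rfl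
  · exact absurd (bddAbove_pair_iff.2 ⟨y b, le_rfl, hy.le.trans h⟩) (F.not_bddAbove b)

theorem not_upper_le_lower {a b : ℕ} (ha : a < m) (hb : b < m) : ¬ y a ≤ x b := by
  intro h
  obtain rfl := F.eq_of_upper_le_upper hch ha hb (h.trans (F.le b))
  exact F.not_bddBelow a (bddBelow_pair_iff.2 ⟨x (a + 1), (F.succ_le a).trans h, le_rfl⟩)

theorem exists_crown : ∃ f : Fin (2 * m) → P, Injective f ∧
    ∀ a b, crownLE (2 * m) a b ↔ f a ≤ f b := by
  let g : ℕ → P := fun a => if a % 2 = 0 then x (a / 2) else y (a / 2)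
  have key : ∀ a b, a < 2 * m → b < 2 * m → (g a ≤ g b ↔ a = b ∨
      (a % 2 = 0 ∧ (b = a + 1 ∨ b + 1 = a ∨ (a = 0 ∧ b + 1 = 2 * m)))) := by
    intro a b ha hb
    have ha' : a / 2 < m := by omega
    have hb' : b / 2 < m := by omega
    rcases Nat.mod_two_eq_zero_or_one a with hpa | hpa <;>
      rcases Nat.mod_two_eq_zero_or_one b with hpb | hpb <;>
      simp only [g, hpa, hpb, if_true, one_ne_zero, if_false, true_and, false_and, or_false]
    · rw [show x (a / 2) ≤ x (b / 2) ↔ a / 2 = b / 2 from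
        ⟨F.eq_of_lower_le_lower hch ha' hb', fun h => h ▸ le_rfl⟩]
      omega
    · rw [F.lower_le_upper_iff hch ha' hb']
      omega
    · simp only [F.not_upper_le_lower hch ha' hb', false_iff]
      omega
    · rw [show y (a / 2) ≤ y (b / 2) ↔ a / 2 = b / 2 from
        ⟨F.eq_of_upper_le_upper hch ha' hb', fun h => h ▸ le_rfl⟩]
      omega
  refine ⟨fun a => g a, fun a b hab => Fin.ext ?_, fun a b => ?_⟩
  · have h₁ := (key a b a.2 b.2).1 hab.le
    have h₂ := (key b a b.2 a.2).1 hab.ge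
    omega
  · rw [crownLE_iff (even_two_mul m), key a b a.2 b.2]

end Chordless

theorem exists_crown_of_diamondFree (hP : DiamondFree P) (F : IsFence x y m) :
    ∃ n, 4 ≤ n ∧ Even n ∧ ∃ f : Fin n → P, Injective f ∧ ∀ a b, crownLE n a b ↔ f a ≤ f b := by
  obtain ⟨m, x, y, F, hch⟩ := F.exists_chordless hP
  exact ⟨2 * m, by linarith [F.two_le], even_two_mul m, F.exists_crown hch⟩

end IsFence

section Zigzag

open Nat

variable {w : ℕ → P} {k : ℕ}

/-- The sequence `w` changes direction at `t + 1`. -/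
def IsTurn (w : ℕ → P) (t : ℕ) : Prop :=
  ¬ (w t < w (t + 1) ↔ w (t + 1) < w (t + 2))

theorem periodic_isTurn (hper : Periodic w k) : Periodic (IsTurn w) k := fun t => by
  simp only [IsTurn, add_right_comm t k, hper _]

theorem exists_not_lt_succ (hper : Periodic w k) (hk : 0 < k) : ∃ r, ¬ w r < w (r + 1) := by
  by_contra! h
  have := strictMono_nat_of_lt_succ h hk
  rw [← zero_add k, hper] at this
  exact this.false

open scoped Classical in
theorem lt_succ_iff_odd_count (h0 : ¬ w 0 < w 1) (t : ℕ) :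
    w t < w (t + 1) ↔ Odd (count (IsTurn w) t) := by
  induction t with
  | zero => simp [h0]
  | succ t ih =>
    by_cases ht : IsTurn w t
    · rw [count_succ, if_pos ht, Nat.odd_add_one, ← ih]
      unfold IsTurn at ht
      tauto
    · rw [count_succ, if_neg ht, add_zero, ← ih]
      unfold IsTurn at ht
      tauto

open scoped Classical in
theorem infinite_isTurn (hper : Periodic w k) (hk : 0 < k)
    (hcov : ∀ i, w i ⋖ w (i + 1) ∨ w (i + 1) ⋖ w i) (h0 : ¬ w 0 < w 1) :
    (Set.ofPred (IsTurn w)).Infinite := by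
  obtain ⟨t₀, ht₀⟩ : ∃ t, IsTurn w t := by
    by_contra! hno
    have hdown : ∀ t, w (t + 1) < w t := fun t =>
      ((hcov t).resolve_left fun h => by
        simpa [count_of_forall_not fun s _ => hno s] using
          (lt_succ_iff_odd_count h0 t).1 h.lt).lt
    obtain ⟨r, hr⟩ := exists_not_lt_succ (w := toDual ∘ w) (hper.comp _) hk
    exact hr (hdown r)
  refine Set.infinite_of_forall_exists_gt fun a => ⟨t₀ + (a + 1) * k, ?_, by nlinarith⟩
  have := (periodic_isTurn hper).nat_mul (a + 1) t₀
  rw [Nat.cast_id] at this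
  rwa [Set.mem_ofPred_eq, this]

section Turns

open scoped Classical

variable (h0 : ¬ w 0 < w 1) (hinf : (Set.ofPred (IsTurn w)).Infinite)
include h0 hinf

theorem lt_succ_nth_iff (n : ℕ) :
    w (nth (IsTurn w) n) < w (nth (IsTurn w) n + 1) ↔ Odd n := by
  rw [lt_succ_iff_odd_count h0, count_nth_of_infinite hinf]

theorem lt_succ_iff_even_of_nth_lt {n t : ℕ} (h₁ : nth (IsTurn w) n < t)
    (h₂ : t ≤ nth (IsTurn w) (n + 1)) : w t < w (t + 1) ↔ Even n := by
  rw [lt_succ_iff_odd_count h0, count_eq_of_nth_lt_of_le_nth hinf h₁ h₂, Nat.odd_add_one,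
    Nat.not_odd_iff_even]

theorem monotoneOn_of_even {n : ℕ} (hn : Even n) :
    MonotoneOn w (Set.Icc (nth (IsTurn w) n + 1) (nth (IsTurn w) (n + 1) + 1)) :=
  monotoneOn_of_le_succ Set.ordConnected_Icc fun t _ ht hst =>
    ((lt_succ_iff_even_of_nth_lt h0 hinf ht.1 (by simpa using hst.2)).2 hn).le

theorem antitoneOn_of_odd (hcov : ∀ i, w i ⋖ w (i + 1) ∨ w (i + 1) ⋖ w i) {n : ℕ}
    (hn : Odd n) :
    AntitoneOn w (Set.Icc (nth (IsTurn w) n + 1) (nth (IsTurn w) (n + 1) + 1)) :=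
  antitoneOn_of_succ_le Set.ordConnected_Icc fun t _ ht hst =>
    ((hcov t).resolve_left fun h => Nat.not_even_iff_odd.2 hn
      ((lt_succ_iff_even_of_nth_lt h0 hinf ht.1 (by simpa using hst.2)).1 h.lt)).le

theorem not_bddAbove_at_turn (hP : DiamondFree P)
    (hcov : ∀ i, w i ⋖ w (i + 1) ∨ w (i + 1) ⋖ w i) (hne : ∀ i, w i ≠ w (i + 2)) {n : ℕ}
    (hn : Even n) : ¬ BddAbove ({w (nth (IsTurn w) n), w (nth (IsTurn w) n + 2)} : Set P) := by
  have hdown : ¬ w (nth (IsTurn w) n) < w (nth (IsTurn w) n + 1) := by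
    rw [lt_succ_nth_iff h0 hinf, Nat.not_odd_iff_even]
    exact hn
  have hup : w (nth (IsTurn w) n + 1) < w (nth (IsTurn w) n + 1 + 1) :=
    (lt_succ_iff_even_of_nth_lt h0 hinf (lt_add_one _)
      (Nat.succ_le_of_lt (nth_strictMono hinf (lt_add_one n)))).2 hn
  exact hP.not_bddAbove_of_covBy ((hcov _).resolve_left fun h => hdown h.lt)
    ((hcov _).resolve_right fun h => h.lt.asymm hup) (hne _)

theorem not_bddBelow_at_turn (hP : DiamondFree P)
    (hcov : ∀ i, w i ⋖ w (i + 1) ∨ w (i + 1) ⋖ w i) (hne : ∀ i, w i ≠ w (i + 2)) {n : ℕ}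
    (hn : Odd n) : ¬ BddBelow ({w (nth (IsTurn w) n), w (nth (IsTurn w) n + 2)} : Set P) := by
  have hup : w (nth (IsTurn w) n) < w (nth (IsTurn w) n + 1) := (lt_succ_nth_iff h0 hinf n).2 hn
  have hdown : ¬ w (nth (IsTurn w) n + 1) < w (nth (IsTurn w) n + 1 + 1) := by
    rw [lt_succ_iff_even_of_nth_lt h0 hinf (lt_add_one _)
      (Nat.succ_le_of_lt (nth_strictMono hinf (lt_add_one n))), Nat.not_even_iff_odd]
    exact hn
  exact hP.not_bddBelow_of_covBy ((hcov _).resolve_right fun h => h.lt.asymm hup)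
    ((hcov _).resolve_left fun h => hdown h.lt) (hne _)

end Turns

open scoped Classical in
/-- As `w` starts downwards, its turns alternate valley, peak, valley, …; these are the lower
and upper points of the fence. -/
theorem exists_isFence_of_zigzag_of_not_lt (hP : DiamondFree P) (hper : Periodic w k)
    (hk : 0 < k) (hcov : ∀ i, w i ⋖ w (i + 1) ∨ w (i + 1) ⋖ w i) (hne : ∀ i, w i ≠ w (i + 2))
    (h0 : ¬ w 0 < w 1) : ∃ m, IsFence (fun j => w (nth (IsTurn w) (2 * j) + 1))
      (fun j => w (nth (IsTurn w) (2 * j + 1) + 1)) m := by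
  have hinf := infinite_isTurn hper hk hcov h0
  have hτ : StrictMono (nth (IsTurn w)) := nth_strictMono hinf
  obtain ⟨m, hm⟩ : Even (count (IsTurn w) k) := by
    rw [← Nat.not_odd_iff_even, ← lt_succ_iff_odd_count h0, ← zero_add k, hper,
      add_right_comm, hper]
    exact h0
  have hshift : ∀ n, nth (IsTurn w) (n + 2 * m) = nth (IsTurn w) n + k := fun n => by
    rw [two_mul, ← hm, nth_add_count_of_periodic (periodic_isTurn hper) hinf]
  refine ⟨m, ⟨?_, fun j => ?_, fun j => ?_, fun j => ?_, fun j => ?_, fun j => ?_, fun j => ?_⟩⟩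
  · refine Nat.pos_of_ne_zero fun hm0 => ?_
    have := hshift 0
    simp only [hm0, mul_zero, add_zero, left_eq_add] at this
    omega
  · simp only [mul_add, hshift, add_right_comm _ k 1, hper _]
  · simp only [mul_add, add_right_comm _ (2 * m) 1, hshift, add_right_comm _ k 1, hper _]
  · have := hτ (lt_add_one (2 * j))
    exact monotoneOn_of_even h0 hinf (even_two_mul j) ⟨le_rfl, by omega⟩ ⟨by omega, le_rfl⟩
      (by omega)
  · have := hτ (lt_add_one (2 * j + 1))
    rw [show 2 * (j + 1) = 2 * j + 1 + 1 by ring]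
    exact antitoneOn_of_odd h0 hinf hcov (odd_two_mul_add_one j) ⟨le_rfl, by omega⟩
      ⟨by omega, le_rfl⟩ (by omega)
  · rw [show 2 * (j + 1) + 1 = 2 * j + 1 + 1 + 1 by ring]
    intro hB
    obtain ⟨d, hd₁, hd₂⟩ := bddAbove_pair_iff.1 hB
    have := hτ (lt_add_one (2 * j + 1))
    have := hτ (lt_add_one (2 * j + 1 + 1))
    refine not_bddAbove_at_turn h0 hinf hP hcov hne (n := 2 * j + 1 + 1)
      (by simp [parity_simps]) (bddAbove_pair_iff.2 ⟨d, le_trans ?_ hd₁, le_trans ?_ hd₂⟩)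
    · exact antitoneOn_of_odd h0 hinf hcov (odd_two_mul_add_one j) ⟨le_rfl, by omega⟩
        ⟨by omega, by omega⟩ (by omega)
    · exact monotoneOn_of_even h0 hinf (n := 2 * j + 1 + 1) (by simp [parity_simps])
        ⟨by omega, by omega⟩ ⟨by omega, le_rfl⟩ (by omega)
  · rw [show 2 * (j + 1) = 2 * j + 1 + 1 by ring]
    intro hB
    obtain ⟨d, hd₁, hd₂⟩ := bddBelow_pair_iff.1 hB
    have := hτ (lt_add_one (2 * j))
    have := hτ (lt_add_one (2 * j + 1))
    refine not_bddBelow_at_turn h0 hinf hP hcov hne (odd_two_mul_add_one j)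
      (bddBelow_pair_iff.2 ⟨d, hd₁.trans ?_, hd₂.trans ?_⟩)
    · exact monotoneOn_of_even h0 hinf (even_two_mul j) ⟨le_rfl, by omega⟩
        ⟨by omega, by omega⟩ (by omega)
    · exact antitoneOn_of_odd h0 hinf hcov (odd_two_mul_add_one j) ⟨by omega, by omega⟩
        ⟨by omega, le_rfl⟩ (by omega)

theorem exists_isFence_of_zigzag (hP : DiamondFree P) (hper : Periodic w k) (hk : 0 < k)
    (hcov : ∀ i, w i ⋖ w (i + 1) ∨ w (i + 1) ⋖ w i) (hne : ∀ i, w i ≠ w (i + 2)) :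
    ∃ m, ∃ x y : ℕ → P, IsFence x y m := by
  obtain ⟨r, hr⟩ := exists_not_lt_succ hper hk
  obtain ⟨m, F⟩ := exists_isFence_of_zigzag_of_not_lt (w := fun i => w (i + r)) hP
    (fun i => by simp only [add_right_comm i k r, hper _]) hk
    (fun i => by simpa only [add_right_comm i 1 r] using hcov (i + r))
    (fun i => by simpa only [add_right_comm i 2 r] using hne (i + r))
    (by simpa only [zero_add, add_comm 1 r] using hr)
  exact ⟨m, _, _, F⟩

end Zigzag

namespace SimpleGraph.Walk.IsCycle

variable {V : Type*} {G : SimpleGraph V} {v : V} {c : G.Walk v v}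

theorem adj_getVert_mod (hc : c.IsCycle) (i : ℕ) :
    G.Adj (c.getVert (i % c.length)) (c.getVert ((i + 1) % c.length)) := by
  have hk := hc.three_le_length
  have hlt := Nat.mod_lt i (show 0 < c.length by omega)
  rcases Nat.add_one_mod_eq_or (show 0 < c.length by omega) i with h | ⟨h, h'⟩
  · rw [h]
    exact c.adj_getVert_succ hlt
  · simpa [h, h'] using c.adj_getVert_succ hlt

theorem getVert_mod_ne_add_two (hc : c.IsCycle) (i : ℕ) :
    c.getVert (i % c.length) ≠ c.getVert ((i + 2) % c.length) := by
  have hk := hc.three_le_length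
  intro h
  have h₁ := Nat.mod_lt i (show 0 < c.length by omega)
  have h₂ := Nat.mod_lt (i + 2) (show 0 < c.length by omega)
  have hmod : i % c.length = (i + 2) % c.length :=
    hc.getVert_injOn' (by rw [Set.mem_ofPred_eq]; omega) (by rw [Set.mem_ofPred_eq]; omega) h
  have := Nat.sub_mod_eq_zero_of_mod_eq hmod.symm
  rw [Nat.add_sub_cancel_left, Nat.mod_eq_of_lt (by omega)] at this
  omega

end SimpleGraph.Walk.IsCycle

end

theorem hasse_isTree_of_diamondFree_no_crown_general
    {P : Type*} [PartialOrder P]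
    (hdf : ¬ ∃ a b c d : P, a ≤ b ∧ b ≤ d ∧ a ≤ c ∧ c ≤ d ∧ ¬ b ≤ c ∧ ¬ c ≤ b)
    (hZ : ∀ n : ℕ, 4 ≤ n → Even n →
      ¬ ∃ f : Fin n → P, Function.Injective f ∧
        ∀ a b : Fin n,
          (a = b ∨ (Even a.val ∧ (b.val = (a.val + 1) % n ∨ b.val = (a.val + (n - 1)) % n)))
            ↔ f a ≤ f b)
    (hconn : (SimpleGraph.fromRel (fun a b : P => a ⋖ b)).Connected) :
    (SimpleGraph.fromRel (fun a b : P => a ⋖ b)).IsTree := by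
  have hP : DiamondFree P := fun a b c d hab hbd hac hcd => by
    by_contra h
    exact hdf ⟨a, b, c, d, hab, hbd, hac, hcd, fun h' => h (.inl h'), fun h' => h (.inr h')⟩
  refine ⟨hconn, fun v c hc => ?_⟩
  obtain ⟨m, x, y, F⟩ := exists_isFence_of_zigzag (w := fun i => c.getVert (i % c.length))
    (k := c.length) hP (fun i => by simp) (by linarith [hc.three_le_length])
    (fun i => ((SimpleGraph.fromRel_adj _ _ _).1 (hc.adj_getVert_mod i)).2)
    hc.getVert_mod_ne_add_two
  obtain ⟨n, hn, hev, hcrown⟩ := F.exists_crown_of_diamondFree hP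
  exact hZ n hn hev hcrown

theorem hasse_isTree_of_diamondFree_no_crown
    {P : Type*} [PartialOrder P] [Finite P]
    (hdf : ¬ ∃ a b c d : P, a ≤ b ∧ b ≤ d ∧ a ≤ c ∧ c ≤ d ∧ ¬ b ≤ c ∧ ¬ c ≤ b)
    (hZ : ∀ n : ℕ, 4 ≤ n → Even n →
      ¬ ∃ f : Fin n → P, Function.Injective f ∧
        ∀ a b : Fin n,
          (a = b ∨ (Even a.val ∧ (b.val = (a.val + 1) % n ∨ b.val = (a.val + (n - 1)) % n)))
            ↔ f a ≤ f b)
    (hconn : (SimpleGraph.fromRel (fun a b : P => a ⋖ b)).Connected) :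
    (SimpleGraph.fromRel (fun a b : P => a ⋖ b)).IsTree :=
  hasse_isTree_of_diamondFree_no_crown_general hdf hZ hconn
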